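/- arXiv:2404.15359 — 2 statements merged into one kernel-verified Lean document; each statement's English description precedes it below -/
import Mathlib

section
/- Let X and U be standard Borel spaces, let μ and ν be probability measures on X × X, let κ₁, κ₂, η₁, η₂ : X → U be Markov kernels, and assume the Kullback–Leibler divergences below are defined (the relevant absolute continuities hold). Let P be the measure on (X × X) × (U × U) obtained by composing μ with the kernel sending (x₁,x₂) to the product measure (κ₁ x₁) × (κ₂ x₂), and let Q be the analogous measure built from ν, η₁, η₂. Then KL(P ‖ Q) = KL(μ ‖ ν) + ∫ KL(κ₂ x₂ ‖ η₂ x₂) dμ(x₁,x₂) + ∫ KL(κ₁ x₁ ‖ η₁ x₁) dμ(x₁,x₂). -/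
/-!
For probability measures the divergence `klDiv` is Mathlib's `InformationTheory.klDiv`, seen in
`EReal`, so Mathlib's chain rule splits `KL(P ‖ Q)` into `KL(μ ‖ ν)` and the divergence between
`μ ⊗ K` and `μ ⊗ L`, where `K`, `L` are the two pair kernels. Since `∂(μ ⊗ K)/∂(μ ⊗ L)` is the
kernel derivative `∂K/∂L`, the second term is the `μ`-average of `KL(K p ‖ L p)`, and additivity of
the divergence on product measures splits that into the two conditional terms.
-/

open MeasureTheory ProbabilityTheory Filter Real Topology
open scoped NNReal ENNReal Classical

/-- Kullback–Leibler divergence: `∫ log (dP/dQ) dP` if `P ≪ Q` (and the integral is defined),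
`+∞` otherwise. -/
noncomputable def klDiv {α : Type*} [MeasurableSpace α] (P Q : Measure α) : EReal :=
  if P ≪ Q ∧ Integrable (llr P Q) P then ((∫ x, llr P Q x ∂P : ℝ) : EReal) else ⊤

/-- The kernel `(x₁, x₂) ↦ (κ₁ x₁) × (κ₂ x₂)` on `X × X`, sending a pair of states to the
product of the two conditional laws of the auxiliary variables. -/
noncomputable def pairKernel {X U : Type*} [MeasurableSpace X] [MeasurableSpace U]
    (κ₁ κ₂ : Kernel X U) : Kernel (X × X) (U × U) :=
  (κ₁.comap Prod.fst measurable_fst) ×ₖ (κ₂.comap Prod.snd measurable_snd)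

lemma klDiv_eq_coe_klDiv {α : Type*} [MeasurableSpace α] (P Q : Measure α)
    [IsProbabilityMeasure P] [IsProbabilityMeasure Q] :
    klDiv P Q = (InformationTheory.klDiv P Q : EReal) := by
  by_cases h : P ≪ Q ∧ Integrable (llr P Q) P
  · -- Gibbs' inequality: the `ENNReal.ofReal` in Mathlib's definition does not truncate.
    have h_nonneg := InformationTheory.integral_llr_add_sub_measure_univ_nonneg h.1 h.2
    simp only [probReal_univ, add_sub_cancel_right] at h_nonneg
    rw [klDiv, if_pos h, InformationTheory.klDiv_of_ac_of_integrable h.1 h.2]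
    simp [EReal.coe_ennreal_ofReal, h_nonneg]
  · rw [klDiv, if_neg h, InformationTheory.klDiv_eq_top_iff.mpr fun hac hint ↦ h ⟨hac, hint⟩]
    rfl

namespace ProbabilityTheory

variable {α β : Type*} [MeasurableSpace α] [MeasurableSpace β]
  [MeasurableSpace.CountableOrCountablyGenerated α β]
  {μ : Measure α} [IsFiniteMeasure μ] {κ η : Kernel α β} [IsFiniteKernel κ] [IsFiniteKernel η]

lemma rnDeriv_measure_compProd_right (h : ∀ᵐ a ∂μ, κ a ≪ η a) :
    (μ ⊗ₘ κ).rnDeriv (μ ⊗ₘ η) =ᵐ[μ ⊗ₘ η] fun p ↦ κ.rnDeriv η p.1 p.2 := by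
  have h_eq : μ ⊗ₘ κ = (μ ⊗ₘ η).withDensity fun p ↦ κ.rnDeriv η p.1 p.2 := by
    rw [← Measure.compProd_withDensity (κ.measurable_rnDeriv η)]
    refine Measure.compProd_congr ?_
    filter_upwards [h] with a ha using (Kernel.withDensity_rnDeriv_eq ha).symm
  rw [h_eq]
  exact Measure.rnDeriv_withDensity _ (κ.measurable_rnDeriv η)

lemma llr_compProd_right_ae_eq (h : μ ⊗ₘ κ ≪ μ ⊗ₘ η) :
    llr (μ ⊗ₘ κ) (μ ⊗ₘ η) =ᵐ[μ ⊗ₘ κ] fun p ↦ log (κ.rnDeriv η p.1 p.2).toReal := by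
  filter_upwards [h.ae_le (rnDeriv_measure_compProd_right h.kernel_of_compProd)] with p hp
  rw [llr, hp]

lemma integral_llr_compProd_right (h_ac : μ ⊗ₘ κ ≪ μ ⊗ₘ η)
    (h_int : Integrable (llr (μ ⊗ₘ κ) (μ ⊗ₘ η)) (μ ⊗ₘ κ)) :
    ∫ p, llr (μ ⊗ₘ κ) (μ ⊗ₘ η) p ∂(μ ⊗ₘ κ) = ∫ a, ∫ y, llr (κ a) (η a) y ∂(κ a) ∂μ := by
  have h_eq := llr_compProd_right_ae_eq h_ac
  rw [integral_congr_ae h_eq, Measure.integral_compProd (h_int.congr h_eq)]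
  refine integral_congr_ae ?_
  filter_upwards [h_ac.kernel_of_compProd] with a ha
  refine integral_congr_ae ?_
  filter_upwards [ha.ae_le (κ.rnDeriv_eq_rnDeriv_measure (η := η))] with y hy
  rw [llr, hy]

end ProbabilityTheory

namespace InformationTheory

section Prod

variable {α β : Type*} [MeasurableSpace α] [MeasurableSpace β]

lemma klDiv_map_measurableEquiv (e : α ≃ᵐ β) (μ ν : Measure α)
    [IsFiniteMeasure μ] [IsFiniteMeasure ν] :
    klDiv (μ.map e) (ν.map e) = klDiv μ ν := by
  refine le_antisymm (klDiv_map_le μ ν e.measurable) ?_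
  simpa [Measure.map_map e.symm.measurable e.measurable] using
    klDiv_map_le (μ.map e) (ν.map e) e.symm.measurable

lemma klDiv_prod_left (P Q : Measure α) (μ : Measure β) [IsFiniteMeasure P] [IsFiniteMeasure Q]
    [IsProbabilityMeasure μ] :
    klDiv (P.prod μ) (Q.prod μ) = klDiv P Q := by
  rw [← Measure.compProd_const, ← Measure.compProd_const, klDiv_compProd_left]

lemma klDiv_prod_right (μ : Measure α) (P Q : Measure β) [IsProbabilityMeasure μ]
    [IsFiniteMeasure P] [IsFiniteMeasure Q] :
    klDiv (μ.prod P) (μ.prod Q) = klDiv P Q := by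
  rw [← klDiv_map_measurableEquiv MeasurableEquiv.prodComm]
  exact (congrArg₂ klDiv Measure.prod_swap Measure.prod_swap).trans (klDiv_prod_left P Q μ)

lemma klDiv_prod (P₁ Q₁ : Measure α) (P₂ Q₂ : Measure β) [IsProbabilityMeasure P₁]
    [IsProbabilityMeasure Q₁] [IsProbabilityMeasure P₂] [IsProbabilityMeasure Q₂] :
    klDiv (P₁.prod P₂) (Q₁.prod Q₂) = klDiv P₁ Q₁ + klDiv P₂ Q₂ := by
  rw [← Measure.compProd_const, ← Measure.compProd_const, klDiv_compProd_eq_add,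
    Measure.compProd_const, Measure.compProd_const, klDiv_prod_right]

end Prod

section CompProd

variable {α β : Type*} [MeasurableSpace α] [MeasurableSpace β]
  [MeasurableSpace.CountableOrCountablyGenerated α β]
  {μ : Measure α} [IsFiniteMeasure μ] {κ η : Kernel α β} [IsMarkovKernel κ] [IsMarkovKernel η]

lemma toReal_klDiv_compProd_right (h : klDiv (μ ⊗ₘ κ) (μ ⊗ₘ η) ≠ ∞) :
    (klDiv (μ ⊗ₘ κ) (μ ⊗ₘ η)).toReal = ∫ a, (klDiv (κ a) (η a)).toReal ∂μ := by
  obtain ⟨h_ac, h_int⟩ := klDiv_ne_top_iff.mp h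
  rw [toReal_klDiv_of_measure_eq h_ac (by simp [Measure.compProd_apply_univ]),
    integral_llr_compProd_right h_ac h_int]
  refine integral_congr_ae ?_
  filter_upwards [h_ac.kernel_of_compProd] with a ha
  rw [toReal_klDiv_of_measure_eq ha (by simp)]

end CompProd

end InformationTheory

section PairKernel

variable {X U : Type*} [MeasurableSpace X] [MeasurableSpace U]

instance (κ₁ κ₂ : Kernel X U) [IsMarkovKernel κ₁] [IsMarkovKernel κ₂] :
    IsMarkovKernel (pairKernel κ₁ κ₂) := by
  unfold pairKernel; infer_instance

lemma pairKernel_apply (κ₁ κ₂ : Kernel X U) [IsSFiniteKernel κ₁] [IsSFiniteKernel κ₂]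
    (p : X × X) :
    pairKernel κ₁ κ₂ p = (κ₁ p.1).prod (κ₂ p.2) := by
  rw [pairKernel, Kernel.prod_apply, Kernel.comap_apply, Kernel.comap_apply]

end PairKernel

theorem klDiv_pair_decomposition_general {X U : Type*}
    [MeasurableSpace X]
    [MeasurableSpace U] [StandardBorelSpace U]
    (μ ν : Measure (X × X)) [IsProbabilityMeasure μ] [IsProbabilityMeasure ν]
    (κ₁ κ₂ η₁ η₂ : Kernel X U)
    [IsMarkovKernel κ₁] [IsMarkovKernel κ₂] [IsMarkovKernel η₁] [IsMarkovKernel η₂]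
    (hPQ : klDiv (μ ⊗ₘ pairKernel κ₁ κ₂) (ν ⊗ₘ pairKernel η₁ η₂) ≠ ⊤)
    (h2ae : ∀ᵐ p ∂μ, klDiv (κ₂ p.2) (η₂ p.2) ≠ ⊤)
    (h2int : Integrable (fun p ↦ (klDiv (κ₂ p.2) (η₂ p.2)).toReal) μ)
    (h1ae : ∀ᵐ p ∂μ, klDiv (κ₁ p.1) (η₁ p.1) ≠ ⊤)
    (h1int : Integrable (fun p ↦ (klDiv (κ₁ p.1) (η₁ p.1)).toReal) μ) :
    klDiv (μ ⊗ₘ pairKernel κ₁ κ₂) (ν ⊗ₘ pairKernel η₁ η₂) =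
      klDiv μ ν
        + ((∫ p, (klDiv (κ₂ p.2) (η₂ p.2)).toReal ∂μ : ℝ) : EReal)
        + ((∫ p, (klDiv (κ₁ p.1) (η₁ p.1)).toReal ∂μ : ℝ) : EReal) := by
  simp only [klDiv_eq_coe_klDiv, ne_eq, EReal.coe_ennreal_eq_top_iff,
    EReal.toReal_coe_ennreal] at *
  rw [InformationTheory.klDiv_compProd_eq_add] at hPQ ⊢
  obtain ⟨hμν, hcond⟩ := ENNReal.add_ne_top.mp hPQ
  have h_split : ∀ᵐ p ∂μ,
      (InformationTheory.klDiv (pairKernel κ₁ κ₂ p) (pairKernel η₁ η₂ p)).toReal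
        = (InformationTheory.klDiv (κ₂ p.2) (η₂ p.2)).toReal
          + (InformationTheory.klDiv (κ₁ p.1) (η₁ p.1)).toReal := by
    filter_upwards [h1ae, h2ae] with p h1 h2
    rw [pairKernel_apply, pairKernel_apply, InformationTheory.klDiv_prod,
      ENNReal.toReal_add h1 h2, add_comm]
  rw [EReal.coe_ennreal_add, ← EReal.coe_ennreal_toReal hμν, ← EReal.coe_ennreal_toReal hcond,
    InformationTheory.toReal_klDiv_compProd_right hcond, integral_congr_ae h_split,
    integral_add h2int h1int, EReal.coe_add, add_assoc]

/-- The three-term loss decomposition: with `P = μ ⊗ ((x₁,x₂) ↦ (κ₁ x₁) × (κ₂ x₂))` and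
`Q = ν ⊗ ((x₁,x₂) ↦ (η₁ x₁) × (η₂ x₂))`, if all the KL divergences involved are defined, then
`KL(P ‖ Q) = KL(μ ‖ ν) + ∫ KL(κ₂ x₂ ‖ η₂ x₂) dμ(x₁,x₂) + ∫ KL(κ₁ x₁ ‖ η₁ x₁) dμ(x₁,x₂)`. -/
theorem klDiv_pair_decomposition {X U : Type*}
    [MeasurableSpace X] [StandardBorelSpace X]
    [MeasurableSpace U] [StandardBorelSpace U] [Nonempty U]
    (μ ν : Measure (X × X)) [IsProbabilityMeasure μ] [IsProbabilityMeasure ν]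
    (κ₁ κ₂ η₁ η₂ : Kernel X U)
    [IsMarkovKernel κ₁] [IsMarkovKernel κ₂] [IsMarkovKernel η₁] [IsMarkovKernel η₂]
    (hPQ : klDiv (μ ⊗ₘ pairKernel κ₁ κ₂) (ν ⊗ₘ pairKernel η₁ η₂) ≠ ⊤)
    (hμν : klDiv μ ν ≠ ⊤)
    (h2ae : ∀ᵐ p ∂μ, klDiv (κ₂ p.2) (η₂ p.2) ≠ ⊤)
    (h2int : Integrable (fun p ↦ (klDiv (κ₂ p.2) (η₂ p.2)).toReal) μ)
    (h1ae : ∀ᵐ p ∂μ, klDiv (κ₁ p.1) (η₁ p.1) ≠ ⊤)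
    (h1int : Integrable (fun p ↦ (klDiv (κ₁ p.1) (η₁ p.1)).toReal) μ) :
    klDiv (μ ⊗ₘ pairKernel κ₁ κ₂) (ν ⊗ₘ pairKernel η₁ η₂) =
      klDiv μ ν
        + ((∫ p, (klDiv (κ₂ p.2) (η₂ p.2)).toReal ∂μ : ℝ) : EReal)
        + ((∫ p, (klDiv (κ₁ p.1) (η₁ p.1)).toReal ∂μ : ℝ) : EReal) :=
  klDiv_pair_decomposition_general μ ν κ₁ κ₂ η₁ η₂ hPQ h2ae h2int h1ae h1int
end

section
/- Let μ be a probability measure on ℝ whose identity map is square-integrable, with mean m = ∫ x dμ and variance p = ∫ (x − m)² dμ > 0, let f : ℝ → ℝ be square-integrable with respect to μ, and let q > 0. Set a* = (∫ x·f(x) dμ − m·∫ f dμ)/p, b* = ∫ f dμ − a*·m, s* = ∫ (f(x) − a*·x − b*)² dμ, and ω* = q + s*. Then for all a, b ∈ ℝ and all ω > 0, ∫ KL( N(f(x), q) ‖ N(a·x + b, ω) ) dμ(x) ≥ ∫ KL( N(f(x), q) ‖ N(a*·x + b*, ω*) ) dμ(x) = ½·log((q + s*)/q). -/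
open MeasureTheory ProbabilityTheory Filter Real Topology
open scoped NNReal ENNReal Classical

/-!
The KL divergence between two real Gaussians is explicit:
`KL(N(m₁, v₁) ‖ N(m₂, v₂)) = (log (v₂ / v₁) + (v₁ + (m₁ - m₂)²) / v₂ - 1) / 2`.
Averaged over `μ`, the objective therefore depends on `(a, b)` only through the mean-square
residual `R(a, b) = ∫ (f x - a x - b)² dμ`, and equals `(log (ω / q) + (q + R) / ω - 1) / 2`.
Expanding `R(a, b) = Var f - 2 a Cov(x, f) + a² Var x + (𝔼 f - a m - b)²` shows that the
statistical-linearization parameters `(a', b')` minimize `R` (ordinary least squares), and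
`ω ↦ log ω + c / ω` is minimized at `ω = c`, here `c = q + s'`.
-/

section Moments

variable {Ω : Type*} {mΩ : MeasurableSpace Ω} {μ : Measure Ω} [IsProbabilityMeasure μ]
  {X Y : Ω → ℝ}

lemma integral_sq_eq_variance_add_sq (hX : MemLp X 2 μ) :
    ∫ ω, X ω ^ 2 ∂μ = Var[X; μ] + μ[X] ^ 2 := by
  rw [variance_eq_sub hX]
  simp only [Pi.pow_apply, sub_add_cancel]

lemma integral_sub_affine_sq (hX : MemLp X 2 μ) (hY : MemLp Y 2 μ) (a b : ℝ) :
    ∫ ω, (Y ω - a * X ω - b) ^ 2 ∂μ =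
      Var[Y; μ] - 2 * a * cov[X, Y; μ] + a ^ 2 * Var[X; μ] + (μ[Y] - a * μ[X] - b) ^ 2 := by
  have hXY : MemLp (fun ω ↦ Y ω - a * X ω) 2 μ := hY.sub (hX.const_mul a)
  rw [integral_sq_eq_variance_add_sq (X := fun ω ↦ Y ω - a * X ω - b) (hXY.sub (memLp_const b)),
    variance_sub_const hXY.aestronglyMeasurable, variance_fun_sub hY (hX.const_mul a),
    covariance_const_mul_right, variance_const_mul, covariance_comm,
    integral_sub (hXY.integrable one_le_two) (integrable_const b),
    integral_sub (hY.integrable one_le_two) ((hX.integrable one_le_two).const_mul a),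
    integral_const_mul]
  simp only [integral_const, probReal_univ, smul_eq_mul, one_mul]
  ring

lemma integral_sub_affine_sq_le (hX : MemLp X 2 μ) (hY : MemLp Y 2 μ) (hX₀ : Var[X; μ] ≠ 0)
    (a b : ℝ) :
    ∫ ω, (Y ω - cov[X, Y; μ] / Var[X; μ] * X ω - (μ[Y] - cov[X, Y; μ] / Var[X; μ] * μ[X])) ^ 2 ∂μ
      ≤ ∫ ω, (Y ω - a * X ω - b) ^ 2 ∂μ := by
  rw [integral_sub_affine_sq hX hY, integral_sub_affine_sq hX hY]
  set a₀ := cov[X, Y; μ] / Var[X; μ]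
  have hcov : cov[X, Y; μ] = a₀ * Var[X; μ] := (div_mul_cancel₀ _ hX₀).symm
  rw [hcov]
  nlinarith [mul_nonneg (variance_nonneg X μ) (sq_nonneg (a - a₀)),
    sq_nonneg (μ[Y] - a * μ[X] - b)]

end Moments

lemma integral_sub_sq_gaussianReal (m c : ℝ) (v : ℝ≥0) :
    ∫ x, (x - c) ^ 2 ∂gaussianReal m v = v + (m - c) ^ 2 := by
  have h : MemLp (fun x ↦ x - c) 2 (gaussianReal m v) :=
    (memLp_id_gaussianReal 2).sub (memLp_const c)
  rw [integral_sq_eq_variance_add_sq h,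
    variance_sub_const (X := fun x ↦ x) aestronglyMeasurable_id c,
    integral_sub (f := fun x ↦ x) ((memLp_id_gaussianReal 2).integrable one_le_two)
      (integrable_const c), integral_id_gaussianReal]
  simp

lemma log_gaussianPDFReal (m : ℝ) {v : ℝ≥0} (hv : v ≠ 0) (x : ℝ) :
    log (gaussianPDFReal m v x) = -log (2 * π * v) / 2 - (x - m) ^ 2 / (2 * v) := by
  have hv' : (0 : ℝ) < v := by positivity
  rw [gaussianPDFReal, log_mul (by positivity) (exp_pos _).ne', log_inv, log_sqrt (by positivity),
    log_exp]
  ring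

lemma llr_gaussianReal (m₁ m₂ : ℝ) {v₁ v₂ : ℝ≥0} (h₁ : v₁ ≠ 0) (h₂ : v₂ ≠ 0) :
    llr (gaussianReal m₁ v₁) (gaussianReal m₂ v₂) =ᵐ[gaussianReal m₁ v₁]
      fun x ↦ log (v₂ / v₁) / 2 + (x - m₂) ^ 2 / (2 * v₂) - (x - m₁) ^ 2 / (2 * v₁) := by
  have hP := gaussianReal_absolutelyContinuous m₁ h₁
  have hQ := gaussianReal_absolutelyContinuous m₂ h₂
  have hPQ := hP.trans (gaussianReal_absolutelyContinuous' m₂ h₂)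
  filter_upwards [hPQ.ae_le (Measure.rnDeriv_eq_div hP hQ),
    hP.ae_le (rnDeriv_gaussianReal m₁ v₁), hP.ae_le (rnDeriv_gaussianReal m₂ v₂)] with x hx h₁x h₂x
  have hv₁ : (0 : ℝ) < v₁ := by positivity
  have hv₂ : (0 : ℝ) < v₂ := by positivity
  rw [llr, hx, h₁x, h₂x, ENNReal.toReal_div, toReal_gaussianPDF, toReal_gaussianPDF,
    log_div (gaussianPDFReal_pos _ _ _ h₁).ne' (gaussianPDFReal_pos _ _ _ h₂).ne',
    log_gaussianPDFReal _ h₁, log_gaussianPDFReal _ h₂, log_div hv₂.ne' hv₁.ne',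
    log_mul (by positivity) hv₁.ne', log_mul (by positivity) hv₂.ne']
  ring

lemma klDiv_gaussianReal (m₁ m₂ : ℝ) {v₁ v₂ : ℝ≥0} (h₁ : v₁ ≠ 0) (h₂ : v₂ ≠ 0) :
    klDiv (gaussianReal m₁ v₁) (gaussianReal m₂ v₂) =
      ((log (v₂ / v₁) + (v₁ + (m₁ - m₂) ^ 2) / v₂ - 1) / 2 : ℝ) := by
  have hsq (c : ℝ) : Integrable (fun x ↦ (x - c) ^ 2) (gaussianReal m₁ v₁) :=
    ((memLp_id_gaussianReal 2).sub (memLp_const c)).integrable_sq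
  have hint₂ : Integrable (fun x ↦ log (v₂ / v₁) / 2 + (x - m₂) ^ 2 / (2 * v₂))
      (gaussianReal m₁ v₁) := (integrable_const _).add ((hsq m₂).div_const _)
  have hint := hint₂.sub ((hsq m₁).div_const (2 * v₁))
  have hllr := llr_gaussianReal m₁ m₂ h₁ h₂
  have hPQ := (gaussianReal_absolutelyContinuous m₁ h₁).trans
    (gaussianReal_absolutelyContinuous' m₂ h₂)
  rw [klDiv, if_pos ⟨hPQ, hint.congr hllr.symm⟩, integral_congr_ae hllr,
    integral_sub hint₂ ((hsq m₁).div_const _),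
    integral_add (integrable_const _) ((hsq m₂).div_const _)]
  simp only [integral_div, integral_sub_sq_gaussianReal, integral_const, probReal_univ,
    smul_eq_mul, one_mul, sub_self]
  have hv₁ : (0 : ℝ) < v₁ := by positivity
  have hv₂ : (0 : ℝ) < v₂ := by positivity
  congr 1
  field_simp
  ring

lemma integral_klDiv_gaussianReal {α : Type*} [MeasurableSpace α] (μ : Measure α)
    [IsProbabilityMeasure μ] {f g : α → ℝ} (hfg : Integrable (fun x ↦ (f x - g x) ^ 2) μ)
    {v₁ v₂ : ℝ≥0} (h₁ : v₁ ≠ 0) (h₂ : v₂ ≠ 0) :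
    ∫ x, (klDiv (gaussianReal (f x) v₁) (gaussianReal (g x) v₂)).toReal ∂μ =
      (log (v₂ / v₁) + (v₁ + ∫ x, (f x - g x) ^ 2 ∂μ) / v₂ - 1) / 2 := by
  have hkl (x : α) : (klDiv (gaussianReal (f x) v₁) (gaussianReal (g x) v₂)).toReal =
      (log (v₂ / v₁) + v₁ / v₂ - 1) / 2 + (f x - g x) ^ 2 / (2 * v₂) := by
    rw [klDiv_gaussianReal _ _ h₁ h₂, EReal.toReal_coe]
    ring
  simp_rw [hkl]
  rw [integral_add (integrable_const _) (hfg.div_const _), integral_const, integral_div]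
  simp only [probReal_univ, smul_eq_mul, one_mul]
  ring

lemma integral_klDiv_gaussianReal_affine (μ : Measure ℝ) [IsProbabilityMeasure μ]
    (hid : MemLp id 2 μ) {f : ℝ → ℝ} (hf : MemLp f 2 μ) {q ω : ℝ≥0} (hq : q ≠ 0) (hω : ω ≠ 0)
    (a b : ℝ) :
    ∫ x, (klDiv (gaussianReal (f x) q) (gaussianReal (a * x + b) ω)).toReal ∂μ =
      (log (ω / q) + (q + ∫ x, (f x - a * x - b) ^ 2 ∂μ) / ω - 1) / 2 := by
  have hres : Integrable (fun x ↦ (f x - (a * x + b)) ^ 2) μ :=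
    (hf.sub ((hid.const_mul a).add (memLp_const b))).integrable_sq
  simp_rw [integral_klDiv_gaussianReal μ hres hq hω, sub_sub]

lemma log_add_one_le_log_add_div {c ω : ℝ} (hc : 0 < c) (hω : 0 < ω) :
    log c + 1 ≤ log ω + c / ω := by
  have h := log_le_sub_one_of_pos (div_pos hc hω)
  rw [log_div hc.ne' hω.ne'] at h
  linarith

theorem statistical_linearization_optimal_klDiv_general (μ : Measure ℝ) [IsProbabilityMeasure μ]
    (hid : MemLp id 2 μ) (f : ℝ → ℝ) (hf : MemLp f 2 μ)
    (q : ℝ≥0) (hq : 0 < q)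
    (m p a' b' s' : ℝ)
    (hm : m = ∫ x, x ∂μ) (hpdef : p = ∫ x, (x - m) ^ 2 ∂μ) (hp : 0 < p)
    (ha' : a' = ((∫ x, x * f x ∂μ) - m * ∫ x, f x ∂μ) / p)
    (hb' : b' = (∫ x, f x ∂μ) - a' * m)
    (hs' : s' = ∫ x, (f x - a' * x - b') ^ 2 ∂μ) :
    (∀ (a b : ℝ) (ω : ℝ≥0), 0 < ω →
      ∫ x, (klDiv (gaussianReal (f x) q)
          (gaussianReal (a' * x + b') (((q : ℝ) + s').toNNReal))).toReal ∂μ ≤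
        ∫ x, (klDiv (gaussianReal (f x) q) (gaussianReal (a * x + b) ω)).toReal ∂μ) ∧
    ∫ x, (klDiv (gaussianReal (f x) q)
        (gaussianReal (a' * x + b') (((q : ℝ) + s').toNNReal))).toReal ∂μ =
      1 / 2 * Real.log (((q : ℝ) + s') / (q : ℝ)) := by
  have hvar : Var[id; μ] = p := by
    rw [hpdef, hm, variance_eq_integral measurable_id.aemeasurable]
    rfl
  have hcov : cov[id, f; μ] = (∫ x, x * f x ∂μ) - m * ∫ x, f x ∂μ := by
    rw [covariance_eq_sub hid hf, hm]
    rfl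
  have hs'_le (a b : ℝ) : s' ≤ ∫ x, (f x - a * x - b) ^ 2 ∂μ := by
    have h := integral_sub_affine_sq_le hid hf (hvar ▸ hp.ne') a b
    simpa only [hcov, hvar, ← ha', id_eq, ← hm, ← hb', ← hs'] using h
  have hq' : (0 : ℝ) < q := hq
  have hqs : 0 < (q : ℝ) + s' :=
    add_pos_of_pos_of_nonneg hq' (hs' ▸ integral_nonneg fun _ ↦ sq_nonneg _)
  have hopt : ∫ x, (klDiv (gaussianReal (f x) q)
      (gaussianReal (a' * x + b') (((q : ℝ) + s').toNNReal))).toReal ∂μ =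
        1 / 2 * Real.log (((q : ℝ) + s') / (q : ℝ)) := by
    rw [integral_klDiv_gaussianReal_affine μ hid hf hq.ne' (Real.toNNReal_pos.mpr hqs).ne',
      Real.coe_toNNReal _ hqs.le, ← hs', div_self hqs.ne']
    ring
  refine ⟨fun a b ω hω ↦ ?_, hopt⟩
  have hω' : (0 : ℝ) < ω := hω
  have hdiv : ((q : ℝ) + s') / ω ≤ (q + ∫ x, (f x - a * x - b) ^ 2 ∂μ) / ω := by
    gcongr
    exact hs'_le a b
  rw [hopt, integral_klDiv_gaussianReal_affine μ hid hf hq.ne' hω.ne',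
    log_div hqs.ne' hq'.ne', log_div hω'.ne' hq'.ne']
  linarith [log_add_one_le_log_add_div hqs hω']

/-- Optimality of statistical linearization: the affine-Gaussian parameters
`a' = Cov(x, f x)/p`, `b' = 𝔼 f - a' m`, `ω' = q + s'` (with `s'` the mean-square residual)
minimize the expected KL divergence `∫ KL(N(f x, q) ‖ N(a x + b, ω)) dμ(x)` over all
`a, b ∈ ℝ` and `ω > 0`, and the minimum value is `½ log ((q + s')/q)`. -/
theorem statistical_linearization_optimal_klDiv (μ : Measure ℝ) [IsProbabilityMeasure μ]
    (hid : MemLp id 2 μ) (f : ℝ → ℝ) (hfm : Measurable f) (hf : MemLp f 2 μ)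
    (q : ℝ≥0) (hq : 0 < q)
    (m p a' b' s' : ℝ)
    (hm : m = ∫ x, x ∂μ) (hpdef : p = ∫ x, (x - m) ^ 2 ∂μ) (hp : 0 < p)
    (ha' : a' = ((∫ x, x * f x ∂μ) - m * ∫ x, f x ∂μ) / p)
    (hb' : b' = (∫ x, f x ∂μ) - a' * m)
    (hs' : s' = ∫ x, (f x - a' * x - b') ^ 2 ∂μ) :
    (∀ (a b : ℝ) (ω : ℝ≥0), 0 < ω →
      ∫ x, (klDiv (gaussianReal (f x) q)
          (gaussianReal (a' * x + b') (((q : ℝ) + s').toNNReal))).toReal ∂μ ≤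
        ∫ x, (klDiv (gaussianReal (f x) q) (gaussianReal (a * x + b) ω)).toReal ∂μ) ∧
    ∫ x, (klDiv (gaussianReal (f x) q)
        (gaussianReal (a' * x + b') (((q : ℝ) + s').toNNReal))).toReal ∂μ =
      1 / 2 * Real.log (((q : ℝ) + s') / (q : ℝ)) :=
  statistical_linearization_optimal_klDiv_general μ hid f hf q hq m p a' b' s' hm hpdef hp ha' hb'
    hs'
end
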